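/- arXiv:2504.18488 — 2 statements merged into one kernel-verified Lean document; each statement's English description precedes it below -/
import Mathlib

section
/- Let R and S be local integral domains and f : R → S an injective ring homomorphism. If M is a finitely generated R-module with projective dimension at most 1 over R, then the S-module M ⊗_R S has projective dimension at most 1 over S. -/
/-!
Base change along `S` is right exact, so `S^m → S ⊗ M` is onto with kernel the image of
`S^n`, and everything reduces to the injectivity of the base-changed map `S^n → S^m`.
Embed `S` into its fraction field `L`. Every nonzero element of `R` acts invertibly on `L`,
so `L` is a vector space over `Frac R` and hence flat over `R`. In the square
`S ⊗ R^n → S ⊗ R^m → L ⊗ R^m` = `S ⊗ R^n → L ⊗ R^n → L ⊗ R^m` both maps on the right-hand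
side are injective: the first because `R^n` is free, the second because `L` is flat.
-/

open scoped TensorProduct

universe u

/-- A module has projective dimension at most one iff it admits a length-one resolution by
finite free modules (over a Noetherian local ring, for finitely generated modules). -/
def HasProjDimLEOne (R : Type u) (M : Type u) [CommRing R] [AddCommGroup M] [Module R M] :
    Prop :=
  ∃ (n m : ℕ) (g : (Fin n → R) →ₗ[R] (Fin m → R)) (h : (Fin m → R) →ₗ[R] M),
    Function.Injective g ∧ Function.Surjective h ∧ LinearMap.range g = LinearMap.ker h

theorem HasProjDimLEOne.of_exact {R : Type u} [CommRing R] {N : Type u} [AddCommGroup N]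
    [Module R N] {V W : Type*} [AddCommGroup V] [Module R V] [AddCommGroup W] [Module R W]
    {n m : ℕ} (eV : V ≃ₗ[R] (Fin n → R)) (eW : W ≃ₗ[R] (Fin m → R))
    {g : V →ₗ[R] W} {h : W →ₗ[R] N} (hg : Function.Injective g) (hh : Function.Surjective h)
    (hgh : Function.Exact g h) : HasProjDimLEOne R N := by
  refine ⟨n, m, eW.toLinearMap ∘ₗ g ∘ₗ eV.symm.toLinearMap, h ∘ₗ eW.symm.toLinearMap,
    eW.injective.comp (hg.comp eV.symm.injective), hh.comp eW.symm.surjective, ?_⟩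
  refine (LinearMap.exact_iff.mp ?_).symm
  exact hgh.of_ladder_linearEquiv_of_exact (e₁ := eV) (e₂ := eW) (e₃ := LinearEquiv.refl R N)
    (by ext; simp) (by ext; simp)

theorem LinearMap.lTensor_injective_of_injective_into_flat {R S L V W : Type*} [CommRing R]
    [AddCommGroup S] [Module R S] [AddCommGroup L] [Module R L] [Module.Flat R L]
    [AddCommGroup V] [Module R V] [Module.Flat R V] [AddCommGroup W] [Module R W]
    {i : S →ₗ[R] L} (hi : Function.Injective i) {g : V →ₗ[R] W} (hg : Function.Injective g) :
    Function.Injective (g.lTensor S) := by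
  have hsquare : i.rTensor W ∘ₗ g.lTensor S = g.lTensor L ∘ₗ i.rTensor V := by
    rw [LinearMap.rTensor_comp_lTensor, LinearMap.lTensor_comp_rTensor]
  have hinj : Function.Injective (g.lTensor L ∘ₗ i.rTensor V) :=
    (Module.Flat.lTensor_preserves_injective_linearMap g hg).comp
      (Module.Flat.rTensor_preserves_injective_linearMap i hi)
  rw [← hsquare] at hinj
  exact hinj.of_comp (f := i.rTensor W)

theorem Module.Flat.fractionRing_of_injective_algebraMap {R S : Type*} [CommRing R]
    [CommRing S] [IsDomain S] [Algebra R S] (hinj : Function.Injective (algebraMap R S)) :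
    Module.Flat R (FractionRing S) := by
  have : FaithfulSMul R (FractionRing S) := (faithfulSMul_iff_algebraMap_injective _ _).mpr <| by
    rw [IsScalarTower.algebraMap_eq R S (FractionRing S)]
    exact (IsFractionRing.injective S _).comp hinj
  have := IsDomain.of_faithfulSMul R (FractionRing S)
  let := FractionRing.liftAlgebra R (FractionRing S)
  exact Module.Flat.trans R (FractionRing R) (FractionRing S)

theorem LinearMap.baseChange_injective_of_injective_algebraMap {R S V W : Type*} [CommRing R]
    [CommRing S] [IsDomain S] [Algebra R S] (hinj : Function.Injective (algebraMap R S))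
    [AddCommGroup V] [Module R V] [Module.Flat R V] [AddCommGroup W] [Module R W]
    {g : V →ₗ[R] W} (hg : Function.Injective g) : Function.Injective (g.baseChange S) := by
  have := Module.Flat.fractionRing_of_injective_algebraMap hinj
  exact LinearMap.lTensor_injective_of_injective_into_flat
    (i := (IsScalarTower.toAlgHom R S (FractionRing S)).toLinearMap)
    (IsFractionRing.injective S _) hg

theorem stmt_0_general (R S : Type u) [CommRing R] [CommRing S] [IsDomain S]
    [Algebra R S] (hinj : Function.Injective (algebraMap R S))
    (M : Type u) [AddCommGroup M] [Module R M]
    (hpd : HasProjDimLEOne R M) :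
    HasProjDimLEOne S (S ⊗[R] M) := by
  obtain ⟨n, m, g, h, hg, hh, hgh⟩ := hpd
  have hexact : Function.Exact g h := LinearMap.exact_iff.mpr hgh.symm
  exact HasProjDimLEOne.of_exact (TensorProduct.piScalarRight R S S (Fin n))
    (TensorProduct.piScalarRight R S S (Fin m))
    (LinearMap.baseChange_injective_of_injective_algebraMap hinj hg)
    (LinearMap.baseChange_surjective S hh) (lTensor_exact S hexact hh)

theorem stmt_0 (R S : Type u) [CommRing R] [CommRing S] [IsDomain R] [IsDomain S]
    [IsNoetherianRing R] [IsNoetherianRing S] [IsLocalRing R] [IsLocalRing S]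
    [Algebra R S] (hinj : Function.Injective (algebraMap R S))
    (M : Type u) [AddCommGroup M] [Module R M] [Module.Finite R M]
    (hpd : HasProjDimLEOne R M) :
    HasProjDimLEOne S (S ⊗[R] M) :=
  stmt_0_general R S hinj M hpd
end

section
/- Let φ : X → X be an endomorphism of a separated algebraic variety X, and suppose U, V ⊆ X are open subsets such that φ restricts to an isomorphism φ|_U : U → V. If X is irreducible, then φ⁻¹(V) = U. -/
/-!
STATEMENT 7: Let `φ : X → X` be an endomorphism of a separated algebraic variety `X` over a
field, and `U, V` open subsets such that `φ(U) = V` and the restriction `φ|_U : U → V` is an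
isomorphism.  If `X` is irreducible (e.g. integral), then `φ⁻¹(V) = U`.
-/

open AlgebraicGeometry CategoryTheory

universe u

theorem stmt_7 {k : Type u} [Field k]
    (X : Scheme.{u}) (p : X ⟶ Spec (CommRingCat.of k))
    [IsIntegral X] [IsSeparated p] [LocallyOfFiniteType p] [QuasiCompact p]
    (φ : X ⟶ X) (hφp : φ ≫ p = p)
    (U V : X.Opens) (hle : U ≤ φ ⁻¹ᵁ V)
    (himg : φ.base '' (U : Set X) = (V : Set X))
    (hiso : IsIso (φ.resLE V U hle)) :
    φ ⁻¹ᵁ V = U := by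
  by_cases hU : (U : Set X).Nonempty
  · -- main case: U nonempty
    set W : X.Opens := φ ⁻¹ᵁ V with hW
    -- φ is separated
    have hφsep : IsSeparated φ := by
      have : IsSeparated (φ ≫ p) := by rw [hφp]; infer_instance
      exact IsSeparated.of_comp φ p
    -- the restriction φ.resLE V W is separated
    have hrsep : IsSeparated (φ.resLE V W le_rfl) := by
      have : IsSeparated (φ.resLE V W le_rfl ≫ V.ι) := by
        rw [Scheme.Hom.resLE_comp_ι]
        infer_instance
      exact IsSeparated.of_comp _ V.ι
    -- the inclusion U ⟶ W is a closed immersion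
    have hcomp : X.homOfLE hle ≫ φ.resLE V W le_rfl = φ.resLE V U hle :=
      Scheme.Hom.map_resLE _ _ _
    have hci : IsClosedImmersion (X.homOfLE hle) := by
      have : IsClosedImmersion (X.homOfLE hle ≫ φ.resLE V W le_rfl) := by
        rw [hcomp]
        have := hiso; infer_instance
      exact IsClosedImmersion.of_comp (X.homOfLE hle) (φ.resLE V W le_rfl)
    -- the range of the inclusion is clopen in W
    have hclosed : IsClosed (Set.range (X.homOfLE hle).base) :=
      hci.base_closed.isClosed_range
    have hopen : IsOpen (Set.range (X.homOfLE hle).base) :=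
      (X.homOfLE hle).isOpenEmbedding.isOpen_range
    -- W is a preirreducible space
    have hWpre : IsPreirreducible (W : Set X) :=
      PreirreducibleSpace.isPreirreducible_univ.open_subset W.isOpen
        (Set.subset_univ _)
    have : PreirreducibleSpace W := Subtype.preirreducibleSpace hWpre
    -- nonempty open subset of preirreducible space is dense
    obtain ⟨x, hx⟩ := hU
    have hne : (Set.range (X.homOfLE hle).base).Nonempty :=
      ⟨(X.homOfLE hle).base ⟨x, hx⟩, Set.mem_range_self _⟩
    have hdense : Dense (Set.range (X.homOfLE hle).base) := hopen.dense hne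
    have huniv : Set.range (X.homOfLE hle).base = Set.univ := by
      rw [← hclosed.closure_eq]
      exact hdense.closure_eq
    -- conclude W ≤ U
    refine le_antisymm ?_ hle
    intro w hw
    have : (⟨w, hw⟩ : (W : Set X)) ∈ Set.range (X.homOfLE hle).base := by
      rw [huniv]; trivial
    obtain ⟨u, hu⟩ := this
    have h3 := u.2
    rw [← Scheme.homOfLE_apply (X := X) hle u, hu] at h3
    simpa using h3
  · -- degenerate case: U empty
    rw [Set.not_nonempty_iff_eq_empty] at hU
    have hV : (V : Set X) = ∅ := by rw [← himg, hU, Set.image_empty]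
    have hU' : U = ⊥ := TopologicalSpace.Opens.ext hU
    have hV' : V = ⊥ := TopologicalSpace.Opens.ext hV
    rw [hU', hV']
    ext x
    simp
end
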